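/- Let A be a finite-dimensional split commutative semisimple ℂ-algebra with distinguished basis {b_i} indexed by a finite set I, and suppose all |I| characters φ_1,…,φ_{|I|} of A are distinct. Let Ch be the |I| × |I| matrix with entries Ch_{φ,i} = φ(b_i) (the character table). Suppose there is a conjugate-linear anti-involution ∗ with φ(b*) = conj(φ(b)) and a Frobenius functional λ making {b_i} orthonormal for ⟨a,c⟩ = λ(ac*). Then Ch · conj(Ch)^T is the diagonal matrix with diagonal entries the formal codegrees f_φ; in particular the character table matrix Ch is invertible. -/

import Mathlib

/-!
Orthonormality makes `α_φ = ∑ i, φ (b i) • (b i)*` the Riesz representative of the character `φ`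
for the Frobenius form: `λ (x * α_φ) = φ x`. Nondegeneracy of `λ` then forces `α_φ` to be an
eigenvector for multiplication, `a * α_φ = φ a • α_φ`, so every other character `ψ` kills it.
Since `ψ (α_φ) = ∑ i, φ (b i) * conj (ψ (b i))` is the `(φ, ψ)` entry of `Ch * Chᴴ`, this matrix
is diagonal. Its diagonal entries are the squared norms of the rows of `Ch`, which are nonzero
because `φ 1 = 1`; hence `Ch` is invertible.
-/

open Matrix
open scoped ComplexOrder

section Frobenius

variable {k A ι : Type*} [CommRing k] [CommRing A] [Algebra k A] [Fintype ι] [DecidableEq ι]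

theorem apply_mul_sum_smul_eq_of_biorthogonal (b : Module.Basis ι k A) (lam : A →ₗ[k] k)
    (c : ι → A) (hbc : ∀ i j, lam (b i * c j) = if i = j then 1 else 0) (φ : A →ₗ[k] k)
    (x : A) : lam (x * ∑ i, φ (b i) • c i) = φ x := by
  have : lam ∘ₗ LinearMap.mulRight k (∑ i, φ (b i) • c i) = φ :=
    b.ext fun i => by simp [Finset.mul_sum, hbc]
  exact LinearMap.congr_fun this x

theorem mul_eq_smul_of_apply_mul_eq (lam : A →ₗ[k] k)
    (hnd : ∀ a : A, (∀ c : A, lam (a * c) = 0) → a = 0)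
    (φ : A →ₐ[k] k) (α : A) (hα : ∀ x, lam (x * α) = φ x) (a : A) :
    a * α = φ a • α := by
  refine sub_eq_zero.mp (hnd _ fun c => ?_)
  have : (a * α - φ a • α) * c = (a * c) * α - φ a • (c * α) := by
    rw [sub_mul, mul_right_comm, smul_mul_assoc, mul_comm α c]
  rw [this, map_sub, map_smul, hα, hα, map_mul, smul_eq_mul, sub_self]

end Frobenius

theorem AlgHom.apply_eq_zero_of_mul_eq_smul {k A : Type*} [Field k] [Ring A] [Algebra k A]
    {φ ψ : A →ₐ[k] k} (hφψ : φ ≠ ψ) {α : A} (hα : ∀ a, a * α = φ a • α) : ψ α = 0 := by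
  obtain ⟨a, ha⟩ : ∃ a, φ a ≠ ψ a := by
    by_contra! h
    exact hφψ (AlgHom.ext h)
  have := congrArg ψ (hα a)
  rw [map_mul, map_smul, smul_eq_mul] at this
  exact (mul_eq_mul_right_iff.mp this).resolve_left (Ne.symm ha)

theorem AlgHom.comp_basis_ne_zero {k A ι : Type*} [Field k] [Ring A] [Algebra k A]
    (b : Module.Basis ι k A) (φ : A →ₐ[k] k) : (fun i => φ (b i)) ≠ 0 := by
  intro h
  have : φ.toLinearMap = 0 := b.ext fun i => congrFun h i
  simpa using congrArg (fun f : A →ₗ[k] k => f 1) this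

theorem Matrix.isUnit_det_of_mul_conjTranspose_eq_diagonal {K ι : Type*} [Field K]
    [PartialOrder K] [StarRing K] [StarOrderedRing K] [Fintype ι] [DecidableEq ι]
    {M : Matrix ι ι K} {d : ι → K} (hMd : M * Mᴴ = diagonal d) (hM : ∀ p, M p ≠ 0) :
    IsUnit M.det := by
  have hd : ∀ p, d p ≠ 0 := fun p => by
    rw [← diagonal_apply_eq d p, ← hMd, mul_apply]
    exact dotProduct_self_star_eq_zero.not.mpr (hM p)
  have hdet := congrArg det hMd
  rw [det_mul, det_diagonal] at hdet
  exact isUnit_of_mul_isUnit_left (hdet ▸ (Finset.prod_ne_zero_iff.mpr fun p _ => hd p).isUnit)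

theorem stmt5_general {A : Type*} [CommRing A] [Algebra ℂ A]
    {ι : Type*} [Fintype ι] [DecidableEq ι]
    (lam : A →ₗ[ℂ] ℂ)
    (hnd : ∀ a : A, (∀ c : A, lam (a * c) = 0) → a = 0)
    (st : A → A)
    (b : ι → A) (hb : Module.Basis ι ℂ A) (hbe : ∀ i, hb i = b i)
    (horthonormal : ∀ i j, lam (b i * st (b j)) = if i = j then 1 else 0)
    (hchar_st : ∀ (ψ : A →ₐ[ℂ] ℂ) (a : A), ψ (st a) = starRingEnd ℂ (ψ a))
    (chars : ι → (A →ₐ[ℂ] ℂ))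
    (hinj : Function.Injective chars) :
    (Matrix.of fun p i => chars p (b i)) *
        ((Matrix.of fun p i => chars p (b i)).map (starRingEnd ℂ)).transpose =
      Matrix.diagonal (fun p => ∑ i, chars p (b i) * starRingEnd ℂ (chars p (b i))) ∧
    IsUnit (Matrix.of fun p i => chars p (b i)).det := by
  obtain rfl : ⇑hb = b := funext hbe
  set α : ι → A := fun p => ∑ i, chars p (hb i) • st (hb i)
  have hα : ∀ p a, a * α p = chars p a • α p := fun p =>
    mul_eq_smul_of_apply_mul_eq lam hnd (chars p) (α p)
      (apply_mul_sum_smul_eq_of_biorthogonal hb lam _ horthonormal (chars p).toLinearMap)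
  have hentry : ∀ p q, chars q (α p) = ∑ i, chars p (hb i) * starRingEnd ℂ (chars q (hb i)) :=
    fun p q => by simp [α, hchar_st]
  have hdiag : (Matrix.of fun p i => chars p (hb i)) *
      ((Matrix.of fun p i => chars p (hb i)).map (starRingEnd ℂ)).transpose =
      diagonal fun p => ∑ i, chars p (hb i) * starRingEnd ℂ (chars p (hb i)) := by
    ext p q
    rcases eq_or_ne p q with rfl | hpq
    · simp [mul_apply]
    · rw [diagonal_apply_ne _ hpq, ← (AlgHom.apply_eq_zero_of_mul_eq_smul
        (hinj.ne hpq) (hα p)), hentry]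
      simp [mul_apply]
  exact ⟨hdiag, isUnit_det_of_mul_conjTranspose_eq_diagonal hdiag
    fun p => (chars p).comp_basis_ne_zero hb⟩

/-- Character table orthogonality. If `chars` enumerates all the
characters of the split commutative semisimple ℂ-algebra `A` (one for each
basis index), then the character table matrix `Ch` with entries
`Ch_{p,i} = chars p (b i)` satisfies `Ch ⬝ conj(Ch)ᵀ = diagonal (f_φ)` with
diagonal entries the formal codegrees `f_φ = ∑ i, φ(b i) conj(φ(b i))`; in
particular `Ch` is invertible. -/
theorem stmt5 {A : Type*} [CommRing A] [Algebra ℂ A] [FiniteDimensional ℂ A]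
    {ι : Type*} [Fintype ι] [DecidableEq ι]
    (split : A ≃ₐ[ℂ] (ι → ℂ))
    (lam : A →ₗ[ℂ] ℂ)
    (hnd : ∀ a : A, (∀ c : A, lam (a * c) = 0) → a = 0)
    (st : A → A)
    (hst_add : ∀ a c : A, st (a + c) = st a + st c)
    (hst_smul : ∀ (z : ℂ) (a : A), st (z • a) = (starRingEnd ℂ z) • st a)
    (hst_mul : ∀ a c : A, st (a * c) = st c * st a)
    (hst_invol : ∀ a : A, st (st a) = a)
    (b : ι → A) (hb : Module.Basis ι ℂ A) (hbe : ∀ i, hb i = b i)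
    (σ : ι ≃ ι) (hstb : ∀ i, st (b i) = b (σ i))
    (horthonormal : ∀ i j, lam (b i * st (b j)) = if i = j then 1 else 0)
    (hchar_st : ∀ (ψ : A →ₐ[ℂ] ℂ) (a : A), ψ (st a) = starRingEnd ℂ (ψ a))
    (chars : ι → (A →ₐ[ℂ] ℂ))
    (hinj : Function.Injective chars)
    (hall : ∀ ψ : A →ₐ[ℂ] ℂ, ∃ p, chars p = ψ) :
    (Matrix.of fun p i => chars p (b i)) *
        ((Matrix.of fun p i => chars p (b i)).map (starRingEnd ℂ)).transpose =
      Matrix.diagonal (fun p => ∑ i, chars p (b i) * starRingEnd ℂ (chars p (b i))) ∧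
    IsUnit (Matrix.of fun p i => chars p (b i)).det :=
  stmt5_general lam hnd st b hb hbe horthonormal hchar_st chars hinj
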